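/- For any instance of the charging game (any number T of time steps) and any uniform price profile (p_t = c for all t and some c∈ℝ), every admissible strategy profile is a Nash equilibrium; in particular a Nash equilibrium exists for every instance under uniform prices. -/

import Mathlib

/-!
Formalization of the charging game on capacitated energy networks.

An instance consists of a finite directed host graph `H = (V, E)`, `T` time steps
(with per-time-step edge capacities `κE` and demands `d`), and a finite set `B` of
battery agents, each located at a node `loc b`, with battery edges `(b_t, b_{t+1})`
of capacity `κB b t`.
-/

structure ChargingGame where
  /-- households/vertices of the host graph -/
  V : Type
  fintypeV : Fintype V
  decV : DecidableEq V
  /-- number of time steps (time steps are indexed by `Fin T`) -/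
  T : ℕ
  T_pos : 0 < T
  /-- directed edges (power lines) of the host graph -/
  E : Finset (V × V)
  /-- capacity of (the copy of) edge `e` in time step `t` -/
  κE : Fin T → V × V → ℝ
  κE_nonneg : ∀ t e, 0 ≤ κE t e
  /-- demand/supply of node `v` in time step `t` (positive = supply, negative = demand) -/
  d : Fin T → V → ℝ
  /-- the battery agents -/
  B : Type
  fintypeB : Fintype B
  decB : DecidableEq B
  /-- the location of agent `b` -/
  loc : B → V
  /-- capacity of the battery edge `(b_t, b_{t+1})` (only `t` with `t+1 < T` is relevant) -/
  κB : B → Fin T → ℝ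
  κB_nonneg : ∀ b t, 0 ≤ κB b t

attribute [instance] ChargingGame.fintypeV ChargingGame.decV
attribute [instance] ChargingGame.fintypeB ChargingGame.decB

namespace ChargingGame

variable (G : ChargingGame)

/-- Nodes of the time-expanded energy network graph `G`:
grid nodes `(t, v)`, battery nodes `(t, b)`, and `false` = source `x`, `true` = sink `y`. -/
abbrev Node : Type := (Fin G.T × G.V) ⊕ ((Fin G.T × G.B) ⊕ Bool)

/-- the source `x` -/
abbrev source : G.Node := Sum.inr (Sum.inr false)

/-- the sink `y` -/
abbrev sink : G.Node := Sum.inr (Sum.inr true)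

/-- the copy of household node `v` in time step `t` -/
abbrev gridNode (t : Fin G.T) (v : G.V) : G.Node := Sum.inl (t, v)

/-- the battery node `b_t` of agent `b` in time step `t` -/
abbrev batNode (t : Fin G.T) (b : G.B) : G.Node := Sum.inr (Sum.inl (t, b))

/-- The capacities of the graph `G_s` induced by a strategy profile
`s : B → Fin T → ℝ` (`s b t > 0` means agent `b` charges `s b t` in step `t`,
`s b t < 0` means she discharges `-(s b t)`).  Non-edges have capacity `0`. -/
def cap (s : G.B → Fin G.T → ℝ) : G.Node → G.Node → ℝ
  | Sum.inl (t, v), Sum.inl (t', v') =>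
      if t = t' ∧ (v, v') ∈ G.E then G.κE t (v, v') else 0
  | Sum.inl (t, v), Sum.inr (Sum.inl (t', b)) =>
      if t = t' ∧ G.loc b = v then max 0 (s b t') else 0
  | Sum.inr (Sum.inl (t, b)), Sum.inl (t', v) =>
      if t = t' ∧ G.loc b = v then max 0 (-(s b t)) else 0
  | Sum.inr (Sum.inl (t, b)), Sum.inr (Sum.inl (t', b')) =>
      if b = b' ∧ (t' : ℕ) = (t : ℕ) + 1 then G.κB b t else 0
  | Sum.inr (Sum.inr false), Sum.inl (t, v) => max 0 (G.d t v)
  | Sum.inl (t, v), Sum.inr (Sum.inr true) => max 0 (-(G.d t v))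
  | _, _ => 0

/-- A feasible flow on the node set of `G` with capacities `c`. -/
structure IsFlow (c : G.Node → G.Node → ℝ) (f : G.Node → G.Node → ℝ) : Prop where
  nonneg : ∀ u v, 0 ≤ f u v
  le_cap : ∀ u v, f u v ≤ c u v
  conserve : ∀ n, n ≠ G.source → n ≠ G.sink → (∑ u, f u n) = (∑ w, f n w)

/-- The value `|f|` of a flow: total flow leaving the source. -/
def value (f : G.Node → G.Node → ℝ) : ℝ := ∑ v, f G.source v

/-- `f` is a maximum flow for capacities `c`. -/
def IsMaxFlow (c : G.Node → G.Node → ℝ) (f : G.Node → G.Node → ℝ) : Prop :=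
  G.IsFlow c f ∧ ∀ g, G.IsFlow c g → G.value g ≤ G.value f

/-- Agent `b`'s strategy is admissible for the profile `s`:
every maximum flow in `G_s` saturates both transaction edges of `b` in every time step. -/
def Admissible (s : G.B → Fin G.T → ℝ) (b : G.B) : Prop :=
  ∀ f, G.IsMaxFlow (G.cap s) f → ∀ t : Fin G.T,
    f (G.gridNode t (G.loc b)) (G.batNode t b)
        = G.cap s (G.gridNode t (G.loc b)) (G.batNode t b) ∧
    f (G.batNode t b) (G.gridNode t (G.loc b))
        = G.cap s (G.batNode t b) (G.gridNode t (G.loc b))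

/-- A valid strategy of agent `b`: all prefix sums lie between `0` and the battery
capacity (for every `t` with `t + 1 < T`, i.e. `t ∈ [T-1]` in 1-based indexing). -/
def ValidStrategy (b : G.B) (sb : Fin G.T → ℝ) : Prop :=
  ∀ t : Fin G.T, (t : ℕ) + 1 < G.T →
    0 ≤ (∑ z ∈ Finset.Iic t, sb z) ∧ (∑ z ∈ Finset.Iic t, sb z) ≤ G.κB b t

/-- A valid strategy profile. -/
def ValidProfile (s : G.B → Fin G.T → ℝ) : Prop := ∀ b, G.ValidStrategy b (s b)

open scoped Classical in
/-- The utility of agent `b` under price profile `p` and strategy profile `s`: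
`-∑ t, s b t * p t` if `b`'s strategy is admissible, and `-∞` otherwise. -/
noncomputable def utility (p : Fin G.T → ℝ) (s : G.B → Fin G.T → ℝ) (b : G.B) : EReal :=
  if G.Admissible s b then ((-(∑ t, s b t * p t) : ℝ) : EReal) else ⊥

/-- `s` is a (pure) Nash equilibrium for the price profile `p`. -/
def IsNash (p : Fin G.T → ℝ) (s : G.B → Fin G.T → ℝ) : Prop :=
  G.ValidProfile s ∧
  ∀ b (sb' : Fin G.T → ℝ), G.ValidStrategy b sb' →
    ¬ G.utility p s b < G.utility p (Function.update s b sb') b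

/-- `s` is a `k`-strong equilibrium for the price profile `p`: no nonempty coalition of
at most `k` agents has a joint deviation strictly improving the utility of each member. -/
def IsStrongEq (k : ℕ) (p : Fin G.T → ℝ) (s : G.B → Fin G.T → ℝ) : Prop :=
  G.ValidProfile s ∧
  ∀ C : Finset G.B, C.Nonempty → C.card ≤ k →
    ∀ s' : G.B → Fin G.T → ℝ, (∀ b, G.ValidStrategy b (s' b)) →
      (∀ b ∉ C, s' b = s b) →
      ¬ ∀ b ∈ C, G.utility p s b < G.utility p s' b

/-- The welfare `W(s)` of a strategy profile `s`: the value of a maximum flow in `G_s`. -/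
noncomputable def welfare (s : G.B → Fin G.T → ℝ) : ℝ :=
  sSup {r | ∃ f, G.IsFlow (G.cap s) f ∧ G.value f = r}

/-- The maximum welfare over all (valid) strategy profiles. -/
noncomputable def optWelfare : ℝ :=
  sSup {r | ∃ s, G.ValidProfile s ∧ G.welfare s = r}

end ChargingGame

/-!
Summing flow conservation over the battery nodes `b_1, …, b_T` shows that every feasible flow
charges battery `b` exactly as much as it discharges it. A maximum flow exists (compactness), and
for an admissible strategy it saturates the transaction edges, so the entries of `s_b` sum to zero.
Under a uniform price `c` an admissible strategy thus has utility `-c · ∑ₜ s_{b,t} = 0`, while any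
deviation has utility `0` or `-∞`; and the all-zero profile is valid and admissible.
-/

namespace ChargingGame

variable (G : ChargingGame)

lemma cap_nonneg (s : G.B → Fin G.T → ℝ) (u v : G.Node) : 0 ≤ G.cap s u v := by
  rcases u with ⟨t, v0⟩ | ⟨⟨t, b⟩ | (_ | _)⟩ <;>
    rcases v with ⟨t', v1⟩ | ⟨⟨t', b'⟩ | (_ | _)⟩ <;>
    simp only [cap] <;>
    first
      | (split_ifs <;>
          first
            | exact le_rfl
            | exact G.κE_nonneg _ _
            | exact le_max_left 0 _
            | exact G.κB_nonneg _ _)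
      | exact le_rfl
      | exact le_max_left 0 _

lemma isClosed_setOf_isFlow (c : G.Node → G.Node → ℝ) : IsClosed {f | G.IsFlow c f} := by
  have hcont (u v : G.Node) : Continuous fun f : G.Node → G.Node → ℝ => f u v := by fun_prop
  have hflow : {f | G.IsFlow c f} =
      (⋂ u, ⋂ v, {f : G.Node → G.Node → ℝ | f u v ∈ Set.Icc 0 (c u v)}) ∩
        ⋂ n, ⋂ (_ : n ≠ G.source), ⋂ (_ : n ≠ G.sink),
          {f : G.Node → G.Node → ℝ | ∑ u, f u n = ∑ w, f n w} := by
    ext f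
    simp only [Set.mem_ofPred_eq, Set.mem_inter_iff, Set.mem_iInter, Set.mem_Icc]
    exact ⟨fun ⟨h₀, hc, hcons⟩ => ⟨fun u v => ⟨h₀ u v, hc u v⟩, hcons⟩,
      fun ⟨hb, hcons⟩ => ⟨fun u v => (hb u v).1, fun u v => (hb u v).2, hcons⟩⟩
  rw [hflow]
  refine (isClosed_iInter fun u => isClosed_iInter fun v => isClosed_Icc.preimage (hcont u v)).inter
    (isClosed_iInter fun n => isClosed_iInter fun _ => isClosed_iInter fun _ => ?_)
  exact isClosed_eq (continuous_finsetSum _ fun u _ => hcont u n)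
    (continuous_finsetSum _ fun w _ => hcont n w)

lemma exists_isMaxFlow (c : G.Node → G.Node → ℝ) (hc : 0 ≤ c) : ∃ f, G.IsMaxFlow c f := by
  have hcompact : IsCompact {f | G.IsFlow c f} :=
    isCompact_Icc.of_isClosed_subset (G.isClosed_setOf_isFlow c)
      fun f hf => ⟨fun u v => hf.nonneg u v, fun u v => hf.le_cap u v⟩
  have hzero : G.IsFlow c 0 := ⟨fun _ _ => le_rfl, hc, fun _ _ _ => by simp⟩
  obtain ⟨f, hf, hmax⟩ := hcompact.exists_isMaxOn ⟨0, hzero⟩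
    (continuous_finsetSum _ fun v _ => by fun_prop : Continuous G.value).continuousOn
  exact ⟨f, hf, fun g hg => hmax hg⟩

section Flows

variable {G} {s : G.B → Fin G.T → ℝ} {f : G.Node → G.Node → ℝ}

lemma IsFlow.eq_zero_of_cap_eq_zero {c : G.Node → G.Node → ℝ} (hf : G.IsFlow c f)
    {u v : G.Node} (huv : c u v = 0) : f u v = 0 :=
  le_antisymm (huv ▸ hf.le_cap u v) (hf.nonneg u v)

lemma IsFlow.sum_into_batNode (hf : G.IsFlow (G.cap s) f) (t : Fin G.T) (b : G.B) :
    ∑ u, f u (G.batNode t b) =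
      f (G.gridNode t (G.loc b)) (G.batNode t b) + ∑ t', f (G.batNode t' b) (G.batNode t b) := by
  have hgrid : ∑ x : Fin G.T × G.V, f (Sum.inl x) (G.batNode t b) =
      f (G.gridNode t (G.loc b)) (G.batNode t b) := by
    refine Finset.sum_eq_single (t, G.loc b) (fun ⟨t', v⟩ _ hne => ?_) (by simp)
    refine hf.eq_zero_of_cap_eq_zero (if_neg ?_)
    rintro ⟨rfl, rfl⟩
    exact hne rfl
  have hbat : ∑ x : Fin G.T × G.B, f (Sum.inr (Sum.inl x)) (G.batNode t b) =
      ∑ t', f (G.batNode t' b) (G.batNode t b) := by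
    rw [Fintype.sum_prod_type]
    refine Finset.sum_congr rfl fun t' _ => Finset.sum_eq_single b (fun b' _ hne => ?_) (by simp)
    exact hf.eq_zero_of_cap_eq_zero (if_neg fun h => hne h.1)
  have hterminal : ∑ x : Bool, f (Sum.inr (Sum.inr x)) (G.batNode t b) = 0 :=
    Finset.sum_eq_zero fun x _ => hf.eq_zero_of_cap_eq_zero (by cases x <;> rfl)
  rw [Fintype.sum_sum_type, Fintype.sum_sum_type, hgrid, hbat, hterminal, add_zero]

lemma IsFlow.sum_out_of_batNode (hf : G.IsFlow (G.cap s) f) (t : Fin G.T) (b : G.B) :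
    ∑ w, f (G.batNode t b) w =
      f (G.batNode t b) (G.gridNode t (G.loc b)) + ∑ t', f (G.batNode t b) (G.batNode t' b) := by
  have hgrid : ∑ x : Fin G.T × G.V, f (G.batNode t b) (Sum.inl x) =
      f (G.batNode t b) (G.gridNode t (G.loc b)) := by
    refine Finset.sum_eq_single (t, G.loc b) (fun ⟨t', v⟩ _ hne => ?_) (by simp)
    refine hf.eq_zero_of_cap_eq_zero (if_neg ?_)
    rintro ⟨rfl, rfl⟩
    exact hne rfl
  have hbat : ∑ x : Fin G.T × G.B, f (G.batNode t b) (Sum.inr (Sum.inl x)) =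
      ∑ t', f (G.batNode t b) (G.batNode t' b) := by
    rw [Fintype.sum_prod_type]
    refine Finset.sum_congr rfl fun t' _ => Finset.sum_eq_single b (fun b' _ hne => ?_) (by simp)
    exact hf.eq_zero_of_cap_eq_zero (if_neg fun h => hne h.1.symm)
  have hterminal : ∑ x : Bool, f (G.batNode t b) (Sum.inr (Sum.inr x)) = 0 :=
    Finset.sum_eq_zero fun x _ => hf.eq_zero_of_cap_eq_zero (by cases x <;> rfl)
  rw [Fintype.sum_sum_type, Fintype.sum_sum_type, hgrid, hbat, hterminal, add_zero]

lemma IsFlow.sum_charge_eq_sum_discharge (hf : G.IsFlow (G.cap s) f) (b : G.B) :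
    ∑ t, f (G.gridNode t (G.loc b)) (G.batNode t b) =
      ∑ t, f (G.batNode t b) (G.gridNode t (G.loc b)) := by
  have hcons : ∑ t, ∑ u, f u (G.batNode t b) = ∑ t, ∑ w, f (G.batNode t b) w :=
    Finset.sum_congr rfl fun t _ => hf.conserve _ (by simp) (by simp)
  simp only [hf.sum_into_batNode, hf.sum_out_of_batNode, Finset.sum_add_distrib] at hcons
  rw [Finset.sum_comm] at hcons
  linarith

end Flows

lemma sum_eq_zero_of_admissible {s : G.B → Fin G.T → ℝ} {b : G.B} (h : G.Admissible s b) :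
    ∑ t, s b t = 0 := by
  obtain ⟨f, hf⟩ := G.exists_isMaxFlow (G.cap s) (G.cap_nonneg s)
  have hbalance := hf.1.sum_charge_eq_sum_discharge b
  simp only [fun t => (h f hf t).1, fun t => (h f hf t).2, cap, and_self, if_true] at hbalance
  calc ∑ t, s b t = ∑ t, (max 0 (s b t) - max 0 (-s b t)) := by
        refine Finset.sum_congr rfl fun t _ => ?_
        rcases le_total 0 (s b t) with h | h <;> simp [h]
    _ = 0 := by rw [Finset.sum_sub_distrib, hbalance, sub_self]

lemma utility_const_of_admissible (c : ℝ) {s : G.B → Fin G.T → ℝ} {b : G.B}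
    (h : G.Admissible s b) : G.utility (fun _ => c) s b = 0 := by
  rw [utility, if_pos h, ← Finset.sum_mul, G.sum_eq_zero_of_admissible h]
  simp

lemma utility_const_le_zero (c : ℝ) (s : G.B → Fin G.T → ℝ) (b : G.B) :
    G.utility (fun _ => c) s b ≤ 0 := by
  by_cases h : G.Admissible s b
  · exact (G.utility_const_of_admissible c h).le
  · simp [utility, h]

lemma admissible_zero (b : G.B) : G.Admissible 0 b := by
  intro f hf t
  constructor <;> rw [hf.1.eq_zero_of_cap_eq_zero (by simp [cap])] <;> simp [cap]

lemma validProfile_zero : G.ValidProfile 0 := fun b t _ => by simp [G.κB_nonneg b t]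

end ChargingGame

/-- For any instance (any number of time steps) and any uniform price
profile, every admissible (valid) strategy profile is a Nash equilibrium; in particular
a Nash equilibrium exists for every instance under uniform prices. -/
theorem uniform_prices_admissible_is_nash (G : ChargingGame) (c : ℝ) :
    (∀ s : G.B → Fin G.T → ℝ, G.ValidProfile s → (∀ b, G.Admissible s b) →
      G.IsNash (fun _ => c) s) ∧
    ∃ s : G.B → Fin G.T → ℝ, G.IsNash (fun _ => c) s := by
  have hnash (s : G.B → Fin G.T → ℝ) (hs : G.ValidProfile s) (hadm : ∀ b, G.Admissible s b) :
      G.IsNash (fun _ => c) s := by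
    refine ⟨hs, fun b sb _ => ?_⟩
    rw [G.utility_const_of_admissible c (hadm b)]
    exact (G.utility_const_le_zero c _ b).not_gt
  exact ⟨hnash, 0, hnash 0 G.validProfile_zero G.admissible_zero⟩
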